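/- arXiv:1101.2181 — 4 statements merged into one kernel-verified Lean document; each statement's English description precedes it below -/
import Mathlib

section
/- Let G be a finite-dimensional real Lie algebra whose derived ideal G¹ = [G,G] has dimension 2. Then G¹ is commutative (abelian). -/
/-!
If `X, Y ∈ G¹` had `⁅X, Y⁆ ≠ 0`, they would form a basis of the two-dimensional `G¹`. In that
basis `ad X` sends `X ↦ 0`, `Y ↦ ⁅X, Y⁆` and `ad Y` sends `X ↦ -⁅X, Y⁆`, `Y ↦ 0`, so the two
coordinates of `⁅X, Y⁆` are `-tr (ad Y)` and `tr (ad X)`. Both traces vanish because the action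
of a commutator is a commutator of endomorphisms, hence `⁅X, Y⁆ = 0`.
-/

open Module LinearMap

theorem LinearMap.trace_eq_repr_add_repr_of_basis_fin_two {R M : Type*} [CommRing R]
    [AddCommGroup M] [Module R M] (b : Basis (Fin 2) R M) (f : M →ₗ[R] M) :
    trace R M f = b.repr (f (b 0)) 0 + b.repr (f (b 1)) 1 := by
  rw [trace_eq_matrix_trace R b, Matrix.trace_fin_two, toMatrix_apply, toMatrix_apply]

namespace LieAlgebra

section Field

variable {F K : Type*} [Field F] [LieRing K] [LieAlgebra F K]

theorem linearIndependent_pair_of_lie_ne_zero {x y : K} (h : ⁅x, y⁆ ≠ 0) :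
    LinearIndependent F ![x, y] := by
  refine LinearIndependent.pair_iff.mpr fun s t hst => ⟨?_, ?_⟩
  · have hs : s • ⁅x, y⁆ = 0 := by simpa using congrArg (⁅·, y⁆) hst
    exact (smul_eq_zero.mp hs).resolve_right h
  · have ht : t • ⁅x, y⁆ = 0 := by simpa using congrArg (⁅x, ·⁆) hst
    exact (smul_eq_zero.mp ht).resolve_right h

theorem lie_eq_zero_of_finrank_eq_two_of_trace_ad_eq_zero (hK : finrank F K = 2) {x y : K}
    (hx : trace F K (ad F K x) = 0) (hy : trace F K (ad F K y) = 0) : ⁅x, y⁆ = 0 := by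
  by_contra hxy
  have hli := linearIndependent_pair_of_lie_ne_zero (F := F) hxy
  have hcard : Fintype.card (Fin 2) = finrank F K := by simp [hK]
  set b := basisOfLinearIndependentOfCardEqFinrank hli hcard
  have hb : ⇑b = ![x, y] := coe_basisOfLinearIndependentOfCardEqFinrank hli hcard
  have h1 : b.repr ⁅x, y⁆ 1 = 0 := by
    simpa [trace_eq_repr_add_repr_of_basis_fin_two b, hb] using hx
  have h0 : b.repr ⁅x, y⁆ 0 = 0 := by
    rw [← lie_skew, map_neg, Finsupp.neg_apply, neg_eq_zero]
    simpa [trace_eq_repr_add_repr_of_basis_fin_two b, hb] using hy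
  exact hxy (b.ext_elem fun i => by fin_cases i <;> simp [h0, h1])

end Field

theorem trace_ad_derivedSeries_one_eq_zero (R L : Type*) [CommRing R] [LieRing L]
    [LieAlgebra R L] (z : derivedSeries R L 1) :
    trace R _ (ad R (derivedSeries R L 1) z) = 0 :=
  LieModule.trace_toEnd_eq_zero_of_mem_lcs R L _ le_rfl
    (LieModule.derivedSeries_le_lowerCentralSeries R L 1 z.2)

end LieAlgebra

theorem derived_ideal_abelian_of_dim_two_general
    (L : Type) [LieRing L] [LieAlgebra ℝ L]
    (h : Module.finrank ℝ (LieAlgebra.derivedSeries ℝ L 1) = 2) :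
    ∀ X Y : L, X ∈ LieAlgebra.derivedSeries ℝ L 1 →
      Y ∈ LieAlgebra.derivedSeries ℝ L 1 → ⁅X, Y⁆ = 0 := by
  intro X Y hX hY
  let D := LieAlgebra.derivedSeries ℝ L 1
  have h_bracket : ⁅(⟨X, hX⟩ : D), (⟨Y, hY⟩ : D)⁆ = 0 :=
    LieAlgebra.lie_eq_zero_of_finrank_eq_two_of_trace_ad_eq_zero h
      (LieAlgebra.trace_ad_derivedSeries_one_eq_zero ℝ L _)
      (LieAlgebra.trace_ad_derivedSeries_one_eq_zero ℝ L _)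
  exact congrArg Subtype.val h_bracket

theorem derived_ideal_abelian_of_dim_two
    (L : Type) [LieRing L] [LieAlgebra ℝ L] [FiniteDimensional ℝ L]
    (h : Module.finrank ℝ (LieAlgebra.derivedSeries ℝ L 1) = 2) :
    ∀ X Y : L, X ∈ LieAlgebra.derivedSeries ℝ L 1 →
      Y ∈ LieAlgebra.derivedSeries ℝ L 1 → ⁅X, Y⁆ = 0 :=
  derived_ideal_abelian_of_dim_two_general L h
end

section
/- Let G be a finite-dimensional real Lie algebra such that the derived ideal G¹ = [G,G] is abelian and has codimension 1 in G. Then all coadjoint orbits of G have dimension 0 or 2; equivalently, G is an MD-algebra whose maximal orbit dimension is at most 2. -/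
/-- The skew-symmetric bilinear form `B_F(X, Y) = F ⁅X, Y⁆` associated to a
linear functional `F` on a Lie algebra. -/
noncomputable def BF {L : Type} [LieRing L] [LieAlgebra ℝ L]
    (F : Module.Dual ℝ L) : LinearMap.BilinForm ℝ L :=
  LinearMap.mk₂ ℝ (fun X Y => F ⁅X, Y⁆)
    (fun X X' Y => by simp [add_lie])
    (fun c X Y => by simp [smul_lie])
    (fun X Y Y' => by simp [lie_add])
    (fun c X Y => by simp [lie_smul])

/-- The rank of a bilinear form: `dim V` minus the dimension of its radical. -/
noncomputable def rankB {V : Type} [AddCommGroup V] [Module ℝ V]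
    (B : LinearMap.BilinForm ℝ V) : ℕ :=
  Module.finrank ℝ V - Module.finrank ℝ (LinearMap.ker B)

/-!
Pick `v` spanning a complement of the abelian ideal `[L, L]` and let `μ` be the coordinate
along `v`. Expanding `F ⁅X₀ + μ X • v, Y₀ + μ Y • v⁆` with `X₀, Y₀ ∈ [L, L]` shows that
`B_F = μ ∧ F ∘ ad v` is decomposable. A decomposable skew form `μ ∧ f` vanishes when `μ` and `f`
are proportional, and otherwise its radical is `ker μ ∩ ker f`, of codimension 2.
-/

section Wedge

variable {V : Type} [AddCommGroup V] [Module ℝ V]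

lemma rankB_zero : rankB (0 : LinearMap.BilinForm ℝ V) = 0 := by
  rw [rankB, LinearMap.ker_zero, finrank_top, Nat.sub_self]

variable (μ f : Module.Dual ℝ V)

-- Cramer's rule: a pair `X, Y` with `B X Y ≠ 0` is mapped by `(μ, f)` to a basis of `ℝ²`.
lemma surjective_prod_of_smulRight_sub_smulRight_ne_zero
    (hB : μ.smulRight f - f.smulRight μ ≠ 0) : Function.Surjective (μ.prod f) := by
  obtain ⟨X, Y, hXY⟩ : ∃ X Y, μ X * f Y - f X * μ Y ≠ 0 := by
    by_contra! h
    exact hB (LinearMap.ext₂ fun X Y => by simpa using h X Y)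
  rintro ⟨a, b⟩
  refine ⟨(μ X * f Y - f X * μ Y)⁻¹ •
    ((a * f Y - b * μ Y) • X + (b * μ X - a * f X) • Y), ?_⟩
  simp only [LinearMap.prod_apply, Function.prod_apply, map_smul, map_add, Prod.smul_mk,
    Prod.mk_add_mk, smul_eq_mul, Prod.mk.injEq]
  constructor <;> field_simp <;> ring

lemma ker_smulRight_sub_smulRight_of_surjective (hsurj : Function.Surjective (μ.prod f)) :
    LinearMap.ker (μ.smulRight f - f.smulRight μ) = LinearMap.ker (μ.prod f) := by
  obtain ⟨x, hx⟩ := hsurj (1, 0)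
  obtain ⟨y, hy⟩ := hsurj (0, 1)
  simp only [LinearMap.prod_apply, Function.prod_apply, Prod.mk.injEq] at hx hy
  ext X
  simp only [LinearMap.mem_ker, LinearMap.prod_apply, Function.prod_apply, Prod.mk_eq_zero]
  constructor
  · intro hX
    have hXx := LinearMap.congr_fun hX x
    have hXy := LinearMap.congr_fun hX y
    simp only [LinearMap.sub_apply, LinearMap.smulRight_apply, LinearMap.smul_apply,
      smul_eq_mul, hx.1, hx.2, hy.1, hy.2, LinearMap.zero_apply] at hXx hXy
    constructor <;> linarith
  · rintro ⟨hμ, hf⟩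
    ext Y
    simp [hμ, hf]

lemma rankB_smulRight_sub_smulRight [FiniteDimensional ℝ V] :
    rankB (μ.smulRight f - f.smulRight μ) = 0 ∨ rankB (μ.smulRight f - f.smulRight μ) = 2 := by
  by_cases hB : μ.smulRight f - f.smulRight μ = 0
  · exact .inl (hB ▸ rankB_zero)
  right
  have hsurj := surjective_prod_of_smulRight_sub_smulRight_ne_zero μ f hB
  have hrank := LinearMap.finrank_range_add_finrank_ker (μ.prod f)
  rw [LinearMap.range_eq_top.2 hsurj, finrank_top, Module.finrank_prod,
    Module.finrank_self] at hrank
  rw [rankB, ker_smulRight_sub_smulRight_of_surjective μ f hsurj]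
  omega

end Wedge

lemma Submodule.exists_sub_smul_mem_of_finrank_le_succ {V : Type} [AddCommGroup V] [Module ℝ V]
    [FiniteDimensional ℝ V] (p : Submodule ℝ V)
    (hp : Module.finrank ℝ V ≤ Module.finrank ℝ p + 1) :
    ∃ (μ : Module.Dual ℝ V) (v : V), ∀ X, X - μ X • v ∈ p := by
  rcases eq_top_or_lt_top p with rfl | hlt
  · exact ⟨0, 0, fun _ => Submodule.mem_top⟩
  obtain ⟨μ, hμ, hle⟩ := p.exists_le_ker_of_lt_top hlt
  have hker : p = LinearMap.ker μ := Submodule.eq_of_le_of_finrank_le hle (by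
    have := Module.Dual.finrank_ker_add_one_of_ne_zero hμ
    omega)
  obtain ⟨v, hv⟩ := LinearMap.surjective hμ 1
  refine ⟨μ, v, fun X => ?_⟩
  simp [hker, hv]

lemma BF_eq_smulRight_sub_smulRight {L : Type} [LieRing L] [LieAlgebra ℝ L]
    (F : Module.Dual ℝ L) {A : Submodule ℝ L} (hA : ∀ a ∈ A, ∀ b ∈ A, ⁅a, b⁆ = 0)
    (μ : Module.Dual ℝ L) (v : L) (hdec : ∀ X, X - μ X • v ∈ A) :
    BF F = μ.smulRight (BF F v) - (BF F v).smulRight μ := by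
  ext X Y
  have hXY := congrArg F (hA _ (hdec X) _ (hdec Y))
  simp only [sub_lie, lie_sub, smul_lie, lie_smul, lie_self, ← lie_skew X v] at hXY
  simp only [BF, LinearMap.sub_apply, LinearMap.smulRight_apply, LinearMap.mk₂_apply,
    LinearMap.smul_apply, smul_eq_mul]
  simp only [map_sub, map_smul, map_neg, map_zero, smul_eq_mul] at hXY
  linarith

theorem rank_BF_le_two_of_codim_one_abelian_derived_general
    (L : Type) [LieRing L] [LieAlgebra ℝ L] [FiniteDimensional ℝ L]
    (habelian : IsLieAbelian (LieAlgebra.derivedSeries ℝ L 1))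
    (hcodim : Module.finrank ℝ (LieAlgebra.derivedSeries ℝ L 1)
      = Module.finrank ℝ L - 1) :
    ∀ F : Module.Dual ℝ L, rankB (BF F) = 0 ∨ rankB (BF F) = 2 := by
  intro F
  set D := LieAlgebra.derivedSeries ℝ L 1
  have hcomm : ∀ a ∈ D.toSubmodule, ∀ b ∈ D.toSubmodule, ⁅a, b⁆ = 0 := fun a ha b hb =>
    congrArg Subtype.val (habelian.trivial ⟨a, ha⟩ ⟨b, hb⟩)
  obtain ⟨μ, v, hdec⟩ := D.toSubmodule.exists_sub_smul_mem_of_finrank_le_succ (by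
    change Module.finrank ℝ L ≤ Module.finrank ℝ D + 1
    omega)
  rw [BF_eq_smulRight_sub_smulRight F hcomm μ v hdec]
  exact rankB_smulRight_sub_smulRight μ (BF F v)

theorem rank_BF_le_two_of_codim_one_abelian_derived
    (L : Type) [LieRing L] [LieAlgebra ℝ L] [FiniteDimensional ℝ L]
    [LieAlgebra.IsSolvable L]
    (habelian : IsLieAbelian (LieAlgebra.derivedSeries ℝ L 1))
    (hcodim : Module.finrank ℝ (LieAlgebra.derivedSeries ℝ L 1)
      = Module.finrank ℝ L - 1) :
    ∀ F : Module.Dual ℝ L, rankB (BF F) = 0 ∨ rankB (BF F) = 2 :=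
  rank_BF_le_two_of_codim_one_abelian_derived_general L habelian hcodim
end

section
/- There is no finite-dimensional real solvable MD-algebra G whose second derived ideal G² = [[G,G],[G,G]] is nontrivial, abelian, and satisfies dim G² = dim G¹ − 1, where G¹ = [G,G]. -/
/-- A finite-dimensional real solvable Lie algebra is an MD-algebra if the rank of every
form `B_F` is either `0` or one fixed even value. -/
def IsMDAlgebra (L : Type) [LieRing L] [LieAlgebra ℝ L] [FiniteDimensional ℝ L] : Prop :=
  LieAlgebra.IsSolvable L ∧ ∃ k : ℕ, Even k ∧
    ∀ F : Module.Dual ℝ L, rankB (BF F) = 0 ∨ rankB (BF F) = k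

/-!
As `G²` has codimension one in `G¹`, write `G¹ = ℝ a ⊕ G²`. Since `G²` is abelian,
`G² = [G¹, G¹] = [a, G²]`, so `T = ad a` is invertible on `G²`. For every `x`, the element
`[x, a] ∈ G¹` acts on `G²` as `c T` for some scalar `c`, i.e. `[ad x, T] = c T`; taking
`tr (T⁻¹ ·)` gives `c · dim G² = 0`, so `T` commutes with the action of `G` on `G²`. Then
`A ↦ tr (A T⁻¹)` vanishes on the action of `[G, G]`, but at `a ∈ [G, G]` it is `dim G² ≠ 0`.
-/

open LieAlgebra LieModule LinearMap

theorem Module.End.eq_zero_of_mul_sub_mul_eq_smul_of_isUnit {K V : Type*} [Field K]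
    [CharZero K] [AddCommGroup V] [Module K V] [FiniteDimensional K V] [Nontrivial V]
    {X T : Module.End K V} {c : K} (hT : IsUnit T) (h : X * T - T * X = c • T) : c = 0 := by
  obtain ⟨u, rfl⟩ := hT
  have htr : trace K V (↑u⁻¹ * (X * u - u * X)) = 0 := by
    rw [mul_sub, map_sub, trace_mul_comm K (↑u⁻¹ : Module.End K V), mul_assoc, Units.mul_inv,
      mul_one, ← mul_assoc, Units.inv_mul, one_mul, sub_self]
  rw [h, mul_smul_comm, Units.inv_mul, map_smul, trace_one, smul_eq_mul] at htr
  exact (mul_eq_zero.mp htr).resolve_right (Nat.cast_ne_zero.mpr Module.finrank_pos.ne')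

theorem Submodule.exists_span_singleton_sup_eq_of_finrank_eq_succ {K V : Type*} [DivisionRing K]
    [AddCommGroup V] [Module K V] [FiniteDimensional K V] {N M : Submodule K V} (hle : N ≤ M)
    (hdim : Module.finrank K M = Module.finrank K N + 1) : ∃ a ∈ M, K ∙ a ⊔ N = M := by
  obtain ⟨a, haM, haN⟩ := SetLike.exists_of_lt (lt_of_le_of_ne hle (by rintro rfl; omega))
  have hle' : K ∙ a ⊔ N ≤ M := sup_le ((span_singleton_le_iff_mem a M).mpr haM) hle
  have hlt : N < K ∙ a ⊔ N :=
    lt_of_le_of_ne le_sup_right fun h => haN (h ▸ mem_sup_left (mem_span_singleton_self a))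
  have := finrank_lt_finrank_of_lt hlt
  have := finrank_mono hle'
  exact ⟨a, haM, eq_of_le_of_finrank_eq hle' (by omega)⟩

namespace LieModule

section CommRing

variable {R L M : Type*} [CommRing R] [LieRing L] [LieAlgebra R L]
  [AddCommGroup M] [Module R M] [LieRingModule L M] [LieModule R L M]

theorem toEnd_lie_eq_mul_sub_mul (x y : L) :
    toEnd R L M ⁅x, y⁆ = toEnd R L M x * toEnd R L M y - toEnd R L M y * toEnd R L M x := by
  ext m
  simp

theorem trace_toEnd_mul_eq_zero_of_mem_derivedSeries {S : Module.End R M}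
    (hS : ∀ y, Commute (toEnd R L M y) S) {z : L} (hz : z ∈ derivedSeries R L 1) :
    trace R M (toEnd R L M z * S) = 0 := by
  replace hz : z ∈ Submodule.span R {m | ∃ x y : L, ⁅x, y⁆ = m} := by
    rw [← coe_derivedSeries_one_eq]; exact hz
  induction hz using Submodule.span_induction with
  | mem m hm =>
    obtain ⟨x, y, rfl⟩ := hm
    rw [toEnd_lie_eq_mul_sub_mul, sub_mul, map_sub, mul_assoc (toEnd R L M y),
      (hS x).eq, ← mul_assoc, trace_mul_comm R (toEnd R L M y * S), ← mul_assoc, sub_self]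
  | zero => simp
  | add x y _ _ hx hy => rw [map_add, add_mul, map_add, hx, hy, add_zero]
  | smul c x _ hx => rw [map_smul, smul_mul_assoc, map_smul, hx, smul_zero]

end CommRing

section Field

variable {K L M : Type*} [Field K] [CharZero K] [LieRing L] [LieAlgebra K L]
  [AddCommGroup M] [Module K M] [FiniteDimensional K M] [LieRingModule L M] [LieModule K L M]

theorem subsingleton_of_isUnit_toEnd_of_mem_derivedSeries {x : L} (hx : x ∈ derivedSeries K L 1)
    (hunit : IsUnit (toEnd K L M x)) (hcomm : ∀ y, Commute (toEnd K L M y) (toEnd K L M x)) :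
    Subsingleton M := by
  obtain ⟨u, hu⟩ := hunit
  have htr := trace_toEnd_mul_eq_zero_of_mem_derivedSeries (M := M) (S := ↑u⁻¹)
    (fun y => (hu ▸ hcomm y).units_inv_right) hx
  rwa [← hu, Units.mul_inv, trace_one, Nat.cast_eq_zero, Module.finrank_zero_iff] at htr

end Field

end LieModule

namespace LieIdeal

variable {R L : Type*} [CommRing R] [LieRing L] [LieAlgebra R L] {J : LieIdeal R L}

theorem lie_eq_zero_of_isLieAbelian (hJ : IsLieAbelian J) {u v : L} (hu : u ∈ J) (hv : v ∈ J) :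
    ⁅u, v⁆ = 0 :=
  congrArg Subtype.val (trivial_lie_zero J J ⟨u, hu⟩ ⟨v, hv⟩)

theorem toEnd_eq_zero_of_isLieAbelian (hJ : IsLieAbelian J) {u : L} (hu : u ∈ J) :
    toEnd R L J u = 0 := by
  ext v
  exact lie_eq_zero_of_isLieAbelian hJ hu v.2

theorem toEnd_eq_smul_of_mem_span_singleton_sup (hJ : IsLieAbelian J) {a z : L}
    (hz : z ∈ R ∙ a ⊔ J.toSubmodule) : ∃ c : R, toEnd R L J z = c • toEnd R L J a := by
  obtain ⟨_, ha, u, hu, rfl⟩ := Submodule.mem_sup.mp hz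
  obtain ⟨c, rfl⟩ := Submodule.mem_span_singleton.mp ha
  exact ⟨c, by rw [map_add, map_smul, toEnd_eq_zero_of_isLieAbelian hJ hu, add_zero]⟩

theorem lie_self_le_map_ad (hJ : IsLieAbelian J) {I : LieIdeal R L} {a : L}
    (hI : I.toSubmodule = R ∙ a ⊔ J.toSubmodule) :
    (⁅I, I⁆ : LieIdeal R L).toSubmodule ≤ J.toSubmodule.map (ad R L a) := by
  rw [LieSubmodule.lieIdeal_oper_eq_linear_span', Submodule.span_le]
  rintro _ ⟨x, hx, y, hy, rfl⟩
  rw [← LieSubmodule.mem_toSubmodule, hI, Submodule.mem_sup] at hx hy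
  obtain ⟨_, hx, u, hu, rfl⟩ := hx
  obtain ⟨_, hy, v, hv, rfl⟩ := hy
  obtain ⟨c, rfl⟩ := Submodule.mem_span_singleton.mp hx
  obtain ⟨d, rfl⟩ := Submodule.mem_span_singleton.mp hy
  refine ⟨c • v - d • u, J.sub_mem (J.smul_mem c hv) (J.smul_mem d hu), ?_⟩
  have hskew : ⁅u, a⁆ = -⁅a, u⁆ := (lie_skew u a).symm
  simp only [ad_apply, lie_add, add_lie, lie_smul, smul_lie, lie_sub, lie_self, smul_zero,
    lie_eq_zero_of_isLieAbelian hJ hu hv, hskew]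
  module

end LieIdeal

theorem LieAlgebra.derivedSeries_two_eq_bot_of_finrank_succ {K L : Type*} [Field K] [CharZero K]
    [LieRing L] [LieAlgebra K L] [FiniteDimensional K L]
    (habel : IsLieAbelian (derivedSeries K L 2))
    (hdim : Module.finrank K (derivedSeries K L 2) + 1 = Module.finrank K (derivedSeries K L 1)) :
    derivedSeries K L 2 = ⊥ := by
  set D1 := derivedSeries K L 1
  set D2 := derivedSeries K L 2
  have hD2 : D2 = ⁅D1, D1⁆ := derivedSeriesOfIdeal_succ K L ⊤ 1
  by_contra hne
  have : Nontrivial D2 := (LieSubmodule.nontrivial_iff_ne_bot K L L).mpr hne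
  obtain ⟨a, haD1, hsup⟩ := Submodule.exists_span_singleton_sup_eq_of_finrank_eq_succ
    (N := D2.toSubmodule) (M := D1.toSubmodule) (hD2 ▸ LieSubmodule.lie_le_left D1 D1) hdim.symm
  set T := toEnd K L D2 a
  have hsurj : Function.Surjective T := fun w => by
    have hw : (w : L) ∈ (⁅D1, D1⁆ : LieIdeal K L).toSubmodule := hD2 ▸ w.2
    obtain ⟨v, hv, hva⟩ := LieIdeal.lie_self_le_map_ad habel hsup.symm hw
    exact ⟨⟨v, hv⟩, Subtype.ext hva⟩
  have hT : IsUnit T :=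
    (Module.End.isUnit_iff T).mpr ⟨LinearMap.injective_iff_surjective.mpr hsurj, hsurj⟩
  have hcomm : ∀ x, Commute (toEnd K L D2 x) T := by
    intro x
    have hxa : ⁅x, a⁆ ∈ K ∙ a ⊔ D2.toSubmodule := hsup ▸ D1.lie_mem haD1
    obtain ⟨c, hc⟩ := LieIdeal.toEnd_eq_smul_of_mem_span_singleton_sup habel hxa
    rw [toEnd_lie_eq_mul_sub_mul] at hc
    have hc0 : c = 0 := Module.End.eq_zero_of_mul_sub_mul_eq_smul_of_isUnit hT hc
    rwa [hc0, zero_smul, sub_eq_zero] at hc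
  exact not_subsingleton D2 (subsingleton_of_isUnit_toEnd_of_mem_derivedSeries haD1 hT hcomm)

theorem no_MD_with_second_derived_codim_one_general
    (L : Type) [LieRing L] [LieAlgebra ℝ L] [FiniteDimensional ℝ L]
    (hnontriv : LieAlgebra.derivedSeries ℝ L 2 ≠ ⊥)
    (habelian : IsLieAbelian (LieAlgebra.derivedSeries ℝ L 2))
    (hdim : Module.finrank ℝ (LieAlgebra.derivedSeries ℝ L 2)
      = Module.finrank ℝ (LieAlgebra.derivedSeries ℝ L 1) - 1) :
    ¬ IsMDAlgebra L := by
  have : Nontrivial (derivedSeries ℝ L 2) :=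
    (LieSubmodule.nontrivial_iff_ne_bot ℝ L L).mpr hnontriv
  have hpos : 0 < Module.finrank ℝ (derivedSeries ℝ L 2) := Module.finrank_pos
  exact fun _ => hnontriv (derivedSeries_two_eq_bot_of_finrank_succ habelian (by omega))

theorem no_MD_with_second_derived_codim_one
    (L : Type) [LieRing L] [LieAlgebra ℝ L] [FiniteDimensional ℝ L]
    [LieAlgebra.IsSolvable L]
    (hnontriv : LieAlgebra.derivedSeries ℝ L 2 ≠ ⊥)
    (habelian : IsLieAbelian (LieAlgebra.derivedSeries ℝ L 2))
    (hdim : Module.finrank ℝ (LieAlgebra.derivedSeries ℝ L 2)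
      = Module.finrank ℝ (LieAlgebra.derivedSeries ℝ L 1) - 1) :
    ¬ IsMDAlgebra L :=
  no_MD_with_second_derived_codim_one_general L hnontriv habelian hdim
end

section
/- Let G be a real solvable Lie algebra of dimension n ≥ 5 such that dim [G,G] = n − 1 and [[G,G],[G,G]] is abelian. Then G is an MD-algebra (i.e., every form B_F has rank 0 or one fixed maximal even value) if and only if [G,G] is abelian. -/
/-!
If `[G,G]` is abelian, every `B_F` vanishes on the hyperplane `[G,G]`, so its rank is at most 2,
and an alternating form has rank 0 or at least 2. Conversely, by solvability `G² ≠ G¹`, and a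
functional vanishing on `G²` but not on `G¹` gives a form of rank exactly 2; so in an MD-algebra
all forms `B_F` have rank at most 2, i.e. satisfy the Plücker relation, and by polarisation so
does every pair `F, F'`. Take `[Y,Z] ≠ 0`. If `ad Y` and `ad Z` both have rank at most 2, then
`[G,G] ⊆ im ad Y + im ad Z` has dimension at most 3. If, say, `ad Y` has rank at least 3, the
relations force `ad Z ≡ μ • ad Y` modulo `ℝ [Y,Z]`, so `V = Z - μ Y` satisfies
`[V,G] ⊆ ℝ [Y,V]`; this turns the bracket into `[c,d] = f(d) [Y,c] - f(c) [Y,d]`, and the Jacobi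
identity then leaves only `dim [G,G] ≤ 1` or `[G,G] ⊆ ker f`, which is abelian.
-/

open Module LieAlgebra

section BilinForm

variable {V : Type} [AddCommGroup V] [Module ℝ V] [FiniteDimensional ℝ V]

lemma rankB_eq_finrank_range (B : LinearMap.BilinForm ℝ V) :
    rankB B = finrank ℝ (LinearMap.range B) := by
  have := B.finrank_range_add_finrank_ker
  unfold rankB
  omega

lemma rankB_le_of_isotropic (B : LinearMap.BilinForm ℝ V) (p : Submodule ℝ V)
    (hp : ∀ x ∈ p, ∀ y ∈ p, B x y = 0) :
    rankB B ≤ 2 * (finrank ℝ V - finrank ℝ p) := by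
  set Ψ := B ∘ₗ p.subtype
  have hrange : finrank ℝ (LinearMap.range Ψ) ≤ finrank ℝ p.dualAnnihilator := by
    refine Submodule.finrank_mono ?_
    rintro _ ⟨x, rfl⟩
    exact (Submodule.mem_dualAnnihilator _).mpr (hp x x.2)
  have hker : finrank ℝ (LinearMap.ker Ψ) ≤ finrank ℝ (LinearMap.ker B) := by
    rw [← Submodule.finrank_map_subtype_eq]
    refine Submodule.finrank_mono ?_
    rintro _ ⟨x, hx, rfl⟩
    exact hx
  have := Ψ.finrank_range_add_finrank_ker
  have := Subspace.finrank_add_finrank_dualAnnihilator_eq p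
  have := Submodule.finrank_le p
  unfold rankB
  omega

namespace LinearMap.BilinForm.IsAlt

variable {B : LinearMap.BilinForm ℝ V}

lemma two_le_rankB (hB : B.IsAlt) (h0 : B ≠ 0) : 2 ≤ rankB B := by
  obtain ⟨x, y, hxy⟩ : ∃ x y, B x y ≠ 0 := by
    by_contra! h
    exact h0 (LinearMap.ext₂ h)
  have hli : LinearIndependent ℝ ![B x, B y] := by
    rw [LinearIndependent.pair_iff]
    intro s t hst
    have hy := congr($hst y)
    have hx := congr($hst x)
    simp only [LinearMap.add_apply, LinearMap.smul_apply, smul_eq_mul, LinearMap.zero_apply,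
      hB.self_eq_zero, ← hB.neg_eq x y] at hx hy
    constructor
    · simpa [hxy] using hy
    · simpa [hxy] using hx
  have hspan : Submodule.span ℝ (Set.range ![B x, B y]) ≤ LinearMap.range B := by
    rw [Submodule.span_le, Set.range_subset_iff]
    intro i
    fin_cases i <;> exact LinearMap.mem_range_self B _
  rw [rankB_eq_finrank_range]
  simpa [finrank_span_eq_card hli] using Submodule.finrank_mono hspan

lemma plucker (hB : B.IsAlt) (hr : rankB B ≤ 2) (a b c d : V) :
    B a b * B c d - B a c * B b d + B a d * B b c = 0 := by
  have hdep : ¬ LinearIndependent ℝ ![B b, B c, B d] := by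
    intro hli
    have hspan : Submodule.span ℝ (Set.range ![B b, B c, B d]) ≤ LinearMap.range B := by
      rw [Submodule.span_le, Set.range_subset_iff]
      intro i
      fin_cases i <;> exact LinearMap.mem_range_self B _
    have := Submodule.finrank_mono hspan
    rw [finrank_span_eq_card hli, ← rankB_eq_finrank_range] at this
    simp only [Fintype.card_fin] at this
    omega
  obtain ⟨g, hg, i, hgi⟩ := Fintype.not_linearIndependent_iff.mp hdep
  have hrel : ∀ x, g 0 * B b x + g 1 * B c x + g 2 * B d x = 0 := fun x => by
    simpa [Fin.sum_univ_three] using congr($hg x)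
  have ra := hrel a
  have rb := hrel b
  have rc := hrel c
  have rd := hrel d
  simp only [hB.self_eq_zero, ← hB.neg_eq a b, ← hB.neg_eq a c, ← hB.neg_eq a d,
    ← hB.neg_eq b c, ← hB.neg_eq b d, ← hB.neg_eq c d] at ra rb rc rd
  set P := B a b * B c d - B a c * B b d + B a d * B b c
  have h0 : g 0 * P = 0 := by linear_combination (-B c d) * ra + (B a d) * rc - (B a c) * rd
  have h1 : g 1 * P = 0 := by linear_combination (B b d) * ra + (B a b) * rd - (B a d) * rb
  have h2 : g 2 * P = 0 := by linear_combination (-B b c) * ra - (B a b) * rc + (B a c) * rb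
  fin_cases i
  exacts [(mul_eq_zero.mp h0).resolve_left hgi, (mul_eq_zero.mp h1).resolve_left hgi,
    (mul_eq_zero.mp h2).resolve_left hgi]

end LinearMap.BilinForm.IsAlt

end BilinForm

section LinearAlgebra

variable {K V W : Type*} [Field K] [AddCommGroup V] [Module K V] [AddCommGroup W] [Module K W]

lemma Submodule.exists_dual_pair (p : Submodule K W) (hp : 2 ≤ finrank K p) :
    ∃ w₁ ∈ p, ∃ w₂ ∈ p, ∃ h₁ h₂ : Dual K W, h₁ w₁ = 1 ∧ h₁ w₂ = 0 ∧ h₂ w₁ = 0 ∧ h₂ w₂ = 1 := by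
  have : Module.Finite K p := Module.finite_of_finrank_pos (by omega)
  let b := Module.finBasis K p
  let i₁ : Fin (finrank K p) := ⟨0, by omega⟩
  let i₂ : Fin (finrank K p) := ⟨1, by omega⟩
  have hne : i₁ ≠ i₂ := by simp [i₁, i₂, Fin.ext_iff]
  obtain ⟨h₁, hh₁⟩ := LinearMap.exists_extend (b.coord i₁)
  obtain ⟨h₂, hh₂⟩ := LinearMap.exists_extend (b.coord i₂)
  have hcoord : ∀ h : Dual K W, ∀ i, h ∘ₗ p.subtype = b.coord i → ∀ j,
      h (b j) = if j = i then 1 else 0 := by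
    intro h i hh j
    rw [← p.subtype_apply, ← LinearMap.comp_apply, hh, Basis.coord_apply, Basis.repr_self,
      Finsupp.single_apply, eq_comm]
  refine ⟨b i₁, (b i₁).2, b i₂, (b i₂).2, h₁, h₂, ?_, ?_, ?_, ?_⟩ <;>
    simp [hcoord h₁ i₁ hh₁, hcoord h₂ i₂ hh₂, hne, hne.symm]

lemma Submodule.finrank_le_finrank_map_add_finrank_ker [FiniteDimensional K V]
    (f : V →ₗ[K] W) (P : Submodule K V) :
    finrank K P ≤ finrank K (P.map f) + finrank K (LinearMap.ker f) := by
  have hker : finrank K ((LinearMap.ker f).comap P.subtype) ≤ finrank K (LinearMap.ker f) := by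
    rw [← Submodule.finrank_map_subtype_eq]
    exact Submodule.finrank_mono (Submodule.map_comap_le _ _)
  have := (f.domRestrict P).finrank_range_add_finrank_ker
  rw [LinearMap.range_domRestrict, LinearMap.ker_domRestrict] at this
  omega

/-- The hypothesis says `A c ⊙ B d = A d ⊙ B c` in the symmetric square of `W`. -/
lemma LinearMap.exists_eq_smul_of_dual_products_symm [CharZero K] (A B : V →ₗ[K] W)
    (hA : 2 ≤ finrank K (range A))
    (hAB : ∀ (h h' : Dual K W) (c d : V),
      h (A c) * h' (B d) + h' (A c) * h (B d) = h (A d) * h' (B c) + h' (A d) * h (B c)) :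
    ∃ μ : K, B = μ • A := by
  obtain ⟨_, ⟨c₁, rfl⟩, _, ⟨c₂, rfl⟩, h₁, h₂, h11, h12, h21, h22⟩ :=
    (range A).exists_dual_pair hA
  set μ := h₁ (B c₁)
  set ν := h₂ (B c₂)
  have h₁B : ∀ c, h₁ (B c) = μ * h₁ (A c) := fun c => by
    linear_combination (hAB h₁ h₁ c₁ c - 2 * h₁ (B c) * h11) / 2
  have h₂B : ∀ c, h₂ (B c) = ν * h₂ (A c) := fun c => by
    linear_combination (hAB h₂ h₂ c₂ c - 2 * h₂ (B c) * h22) / 2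
  have hνμ : ν = μ := by
    have := hAB h₁ h₂ c₁ c₂
    rw [h11, h12, h21, h22] at this
    linear_combination this
  have hBc₁ : ∀ h : Dual K W, h (B c₁) = μ * h (A c₁) := fun h => by
    have := hAB h h₂ c₁ c₂
    rw [h21, h22, h₂B c₁, h21] at this
    linear_combination -this + h (A c₁) * hνμ
  refine ⟨μ, LinearMap.ext fun c => ?_⟩
  rw [LinearMap.smul_apply, ← sub_eq_zero, ← Module.forall_dual_apply_eq_zero_iff K]
  intro h
  have := hAB h h₁ c c₁
  rw [h11] at this
  rw [map_sub, map_smul, smul_eq_mul]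
  linear_combination -this - h (A c₁) * h₁B c + h₁ (A c) * hBc₁ h

end LinearAlgebra

lemma LieAlgebra.derivedSeries_one_le_iff {R L : Type*} [CommRing R] [LieRing L]
    [LieAlgebra R L] (p : Submodule R L) :
    (derivedSeries R L 1).toSubmodule ≤ p ↔ ∀ x y : L, ⁅x, y⁆ ∈ p := by
  rw [← LieIdeal.toLieSubalgebra_toSubmodule, coe_derivedSeries_one_eq, Submodule.span_le]
  constructor
  · exact fun h x y => h ⟨x, y, rfl⟩
  · rintro h _ ⟨x, y, rfl⟩
    exact h x y

lemma LieAlgebra.derivedSeries_two_ne_one {R L : Type*} [CommRing R] [LieRing L]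
    [LieAlgebra R L] [IsSolvable L] (h : derivedSeries R L 1 ≠ ⊥) :
    derivedSeries R L 2 ≠ derivedSeries R L 1 := by
  intro hfix
  obtain ⟨k, hk⟩ := IsSolvable.solvable (R := R) (L := L)
  apply h
  calc derivedSeries R L 1
      = derivedSeriesOfIdeal R L k (derivedSeries R L 1) := (Function.iterate_fixed hfix k).symm
    _ = derivedSeries R L (k + 1) := (derivedSeriesOfIdeal_add ⊤ k 1).symm
    _ = ⊥ := eq_bot_iff.mpr (hk ▸ derivedSeriesOfIdeal_succ_le ⊤ k)

section LieAlgebra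

variable {L : Type} [LieRing L] [LieAlgebra ℝ L]

lemma BF_apply (F : Dual ℝ L) (x y : L) : BF F x y = F ⁅x, y⁆ := rfl

lemma BF_isAlt (F : Dual ℝ L) : (BF F).IsAlt := fun x => by simp [BF_apply]

lemma BF_eq_zero_iff (F : Dual ℝ L) : BF F = 0 ↔ ∀ x y : L, F ⁅x, y⁆ = 0 :=
  ⟨fun h x y => congr($h x y), fun h => LinearMap.ext₂ h⟩

variable [FiniteDimensional ℝ L]

lemma finrank_derivedSeries_one_le {p : Submodule ℝ L} (h : ∀ x y : L, ⁅x, y⁆ ∈ p) :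
    finrank ℝ (derivedSeries ℝ L 1) ≤ finrank ℝ p :=
  Submodule.finrank_mono ((derivedSeries_one_le_iff p).mpr h)

/-- The identity makes `ker f` abelian, and by the Jacobi identity `[G,G] ⊆ ker f` unless
`ad U` has rank at most one. -/
lemma isLieAbelian_or_finrank_le_one_of_lie_eq {U : L} {f : Dual ℝ L}
    (h : ∀ c d : L, ⁅c, d⁆ = f d • ⁅U, c⁆ - f c • ⁅U, d⁆) :
    IsLieAbelian (derivedSeries ℝ L 1) ∨ finrank ℝ (derivedSeries ℝ L 1) ≤ 1 := by
  set φ := f ∘ₗ ad ℝ L U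
  have hφ : ∀ c d, φ d • ⁅U, c⁆ = φ c • ⁅U, d⁆ := fun c d => by
    have := leibniz_lie U c d
    rw [h ⁅U, c⁆ d, h c ⁅U, d⁆, h c d, lie_sub, lie_smul, lie_smul] at this
    simp only [φ, LinearMap.comp_apply, ad_apply]
    linear_combination (norm := module) -this
  by_cases hφ0 : φ = 0
  · left
    have hf : ∀ c d : L, ⁅c, d⁆ ∈ LinearMap.ker f := fun c d => by
      have hc : f ⁅U, c⁆ = 0 := congr($hφ0 c)
      have hd : f ⁅U, d⁆ = 0 := congr($hφ0 d)
      simp [LinearMap.mem_ker, h c d, hc, hd]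
    have hG := (derivedSeries_one_le_iff _).mpr hf
    rw [LieSubmodule.lie_abelian_iff_lie_self_eq_bot, LieSubmodule.lie_eq_bot_iff]
    intro x hx y hy
    rw [h x y, LinearMap.mem_ker.mp (hG hx), LinearMap.mem_ker.mp (hG hy), zero_smul, zero_smul,
      sub_zero]
  · right
    obtain ⟨e, he⟩ : ∃ e, φ e ≠ 0 := by
      by_contra! h0
      exact hφ0 (LinearMap.ext h0)
    have hU : ∀ x, ⁅U, x⁆ = (φ x / φ e) • ⁅U, e⁆ := fun x => by
      rw [div_eq_inv_mul, mul_smul, ← hφ x e, smul_smul, inv_mul_cancel₀ he, one_smul]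
    refine (finrank_derivedSeries_one_le fun c d => ?_).trans
      ((finrank_span_le_card {⁅U, e⁆}).trans (by simp))
    rw [h c d, hU c, hU d, smul_smul, smul_smul, ← sub_smul]
    exact Submodule.smul_mem _ _ (Submodule.mem_span_singleton_self _)

lemma rankB_BF_eq_two {F : Dual ℝ L} (p : Submodule ℝ L) (hp : finrank ℝ L ≤ finrank ℝ p + 1)
    (hF : ∀ z ∈ p, ∀ w ∈ p, F ⁅z, w⁆ = 0) (h0 : BF F ≠ 0) : rankB (BF F) = 2 := by
  have := rankB_le_of_isotropic (BF F) p hF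
  have := (BF_isAlt F).two_le_rankB h0
  omega

lemma exists_rankB_BF_eq_two [IsSolvable L]
    (hp : finrank ℝ L ≤ finrank ℝ (derivedSeries ℝ L 1) + 1) (h : derivedSeries ℝ L 1 ≠ ⊥) :
    ∃ F : Dual ℝ L, rankB (BF F) = 2 := by
  obtain ⟨x, hx₁, hx₂⟩ := SetLike.exists_of_lt
    ((derivedSeriesOfIdeal_succ_le ⊤ 1).lt_of_ne (derivedSeries_two_ne_one h))
  obtain ⟨F, hFx, hF⟩ :=
    Submodule.exists_le_ker_of_notMem (p := (derivedSeries ℝ L 2).toSubmodule) hx₂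
  refine ⟨F, rankB_BF_eq_two (derivedSeries ℝ L 1).toSubmodule hp (fun z hz w hw => hF ?_) ?_⟩
  · exact LieSubmodule.lie_mem_lie hz hw
  · rw [Ne, BF_eq_zero_iff]
    intro h0
    exact hFx (((derivedSeries_one_le_iff (LinearMap.ker F)).mpr h0) hx₁)

lemma plucker_polarized (hrank : ∀ F : Dual ℝ L, rankB (BF F) ≤ 2) (F F' : Dual ℝ L)
    (a b c d : L) :
    F ⁅a, b⁆ * F' ⁅c, d⁆ + F' ⁅a, b⁆ * F ⁅c, d⁆ - F ⁅a, c⁆ * F' ⁅b, d⁆ - F' ⁅a, c⁆ * F ⁅b, d⁆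
      + F ⁅a, d⁆ * F' ⁅b, c⁆ + F' ⁅a, d⁆ * F ⁅b, c⁆ = 0 := by
  have h := (BF_isAlt F).plucker (hrank F) a b c d
  have h' := (BF_isAlt F').plucker (hrank F') a b c d
  have hsum := (BF_isAlt (F + F')).plucker (hrank (F + F')) a b c d
  simp only [BF_apply, LinearMap.add_apply] at h h' hsum
  linear_combination hsum - h - h'

lemma lie_mem_range_ad_sup (hrank : ∀ F : Dual ℝ L, rankB (BF F) ≤ 2) {Y Z : L}
    (hT : ⁅Y, Z⁆ ≠ 0) (c d : L) :
    ⁅c, d⁆ ∈ LinearMap.range (ad ℝ L Y) ⊔ LinearMap.range (ad ℝ L Z) := by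
  by_contra hcd
  obtain ⟨F', hF'cd, hF'⟩ := Submodule.exists_le_ker_of_notMem hcd
  obtain ⟨F₀, hF₀⟩ := Projective.exists_dual_eq_one ℝ hT
  have hY : ∀ x, F' ⁅Y, x⁆ = 0 := fun x => hF' (Submodule.mem_sup_left ⟨x, rfl⟩)
  have hZ : ∀ x, F' ⁅Z, x⁆ = 0 := fun x => hF' (Submodule.mem_sup_right ⟨x, rfl⟩)
  have := plucker_polarized hrank F₀ F' Y Z c d
  simp only [hY, hZ, hF₀] at this
  exact hF'cd (by linear_combination this)

lemma finrank_derivedSeries_one_le_three (hrank : ∀ F : Dual ℝ L, rankB (BF F) ≤ 2) {Y Z : L}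
    (hT : ⁅Y, Z⁆ ≠ 0) (hY : finrank ℝ (LinearMap.range (ad ℝ L Y)) ≤ 2)
    (hZ : finrank ℝ (LinearMap.range (ad ℝ L Z)) ≤ 2) :
    finrank ℝ (derivedSeries ℝ L 1) ≤ 3 := by
  have hT_le : ℝ ∙ ⁅Y, Z⁆ ≤ LinearMap.range (ad ℝ L Y) ⊓ LinearMap.range (ad ℝ L Z) := by
    rw [Submodule.span_singleton_le_iff_mem]
    exact ⟨⟨Z, rfl⟩, ⟨-Y, by rw [ad_apply, lie_neg, lie_skew]⟩⟩
  have hinf := Submodule.finrank_mono hT_le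
  rw [finrank_span_singleton hT] at hinf
  have := Submodule.finrank_sup_add_finrank_inf_eq (LinearMap.range (ad ℝ L Y))
    (LinearMap.range (ad ℝ L Z))
  have := finrank_derivedSeries_one_le (lie_mem_range_ad_sup hrank hT)
  omega

lemma exists_lie_eq_of_forall_lie_mem_span (hrank : ∀ F : Dual ℝ L, rankB (BF F) ≤ 2)
    {U V : L} (hT : ⁅U, V⁆ ≠ 0) (hV : ∀ c, ⁅V, c⁆ ∈ ℝ ∙ ⁅U, V⁆) :
    ∃ f : Dual ℝ L, ∀ c d : L, ⁅c, d⁆ = f d • ⁅U, c⁆ - f c • ⁅U, d⁆ := by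
  obtain ⟨F₀, hF₀⟩ := Projective.exists_dual_eq_one ℝ hT
  refine ⟨F₀ ∘ₗ ad ℝ L V, fun c d => ?_⟩
  have hf : ∀ c, ⁅V, c⁆ = F₀ ⁅V, c⁆ • ⁅U, V⁆ := fun c => by
    obtain ⟨t, ht⟩ := Submodule.mem_span_singleton.mp (hV c)
    rw [← ht, map_smul, hF₀, smul_eq_mul, mul_one]
  set X := ⁅c, d⁆ - F₀ ⁅V, d⁆ • ⁅U, c⁆ + F₀ ⁅V, c⁆ • ⁅U, d⁆
  have key : ∀ F : Dual ℝ L, F X + F ⁅U, V⁆ * F₀ X = 0 := fun F => by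
    have := plucker_polarized hrank F₀ F U V c d
    rw [hf c, hf d] at this
    simp only [X, map_add, map_sub, map_smul, smul_eq_mul, hF₀] at this ⊢
    linear_combination this
  have hF₀X : F₀ X = 0 := by linear_combination key F₀ / 2 - F₀ X * hF₀ / 2
  have hX : X = 0 := (Module.forall_dual_apply_eq_zero_iff ℝ X).mp fun F => by
    simpa [hF₀X] using key F
  simp only [LinearMap.comp_apply, ad_apply]
  linear_combination (norm := module) hX

lemma exists_lie_eq_of_three_le_finrank_range_ad (hrank : ∀ F : Dual ℝ L, rankB (BF F) ≤ 2)
    {Y Z : L} (hT : ⁅Y, Z⁆ ≠ 0) (hY : 3 ≤ finrank ℝ (LinearMap.range (ad ℝ L Y))) :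
    ∃ (U : L) (f : Dual ℝ L), ∀ c d : L, ⁅c, d⁆ = f d • ⁅U, c⁆ - f c • ⁅U, d⁆ := by
  set q := ℝ ∙ ⁅Y, Z⁆
  have hq : q.mkQ ⁅Y, Z⁆ = 0 :=
    (Submodule.Quotient.mk_eq_zero q).mpr (Submodule.mem_span_singleton_self _)
  have hA : 2 ≤ finrank ℝ (LinearMap.range (q.mkQ ∘ₗ ad ℝ L Y)) := by
    have := (LinearMap.range (ad ℝ L Y)).finrank_le_finrank_map_add_finrank_ker q.mkQ
    rw [Submodule.ker_mkQ, finrank_span_singleton hT] at this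
    rw [LinearMap.range_comp]
    omega
  obtain ⟨μ, hμ⟩ := LinearMap.exists_eq_smul_of_dual_products_symm _ (q.mkQ ∘ₗ ad ℝ L Z) hA
    fun h h' c d => by
      have := plucker_polarized hrank (h ∘ₗ q.mkQ) (h' ∘ₗ q.mkQ) Y Z c d
      simp only [LinearMap.comp_apply, ad_apply, hq, map_zero] at this ⊢
      linear_combination -this
  have hYV : ⁅Y, Z - μ • Y⁆ = ⁅Y, Z⁆ := by rw [lie_sub, lie_smul, lie_self, smul_zero, sub_zero]
  have hV : ∀ c, ⁅Z - μ • Y, c⁆ ∈ ℝ ∙ ⁅Y, Z - μ • Y⁆ := fun c => by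
    rw [hYV, ← Submodule.Quotient.mk_eq_zero, sub_lie, smul_lie, Submodule.Quotient.mk_sub,
      Submodule.Quotient.mk_smul, sub_eq_zero]
    exact congr($hμ c)
  exact ⟨Y, exists_lie_eq_of_forall_lie_mem_span hrank (hYV ▸ hT) hV⟩

lemma isLieAbelian_derivedSeries_one_of_rankB_le_two
    (hrank : ∀ F : Dual ℝ L, rankB (BF F) ≤ 2) (hdim : 4 ≤ finrank ℝ (derivedSeries ℝ L 1)) :
    IsLieAbelian (derivedSeries ℝ L 1) := by
  obtain ⟨Y, Z, hT⟩ : ∃ Y Z : L, ⁅Y, Z⁆ ≠ 0 := by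
    by_contra! h
    have := finrank_derivedSeries_one_le (p := ⊥) fun x y : L => by simp [h x y]
    rw [finrank_bot] at this
    omega
  have of_lie_eq : ∀ (U : L) (f : Dual ℝ L), (∀ c d : L, ⁅c, d⁆ = f d • ⁅U, c⁆ - f c • ⁅U, d⁆) →
      IsLieAbelian (derivedSeries ℝ L 1) := fun U f h =>
    (isLieAbelian_or_finrank_le_one_of_lie_eq h).resolve_right (by omega)
  by_cases hY : 3 ≤ finrank ℝ (LinearMap.range (ad ℝ L Y))
  · obtain ⟨U, f, h⟩ := exists_lie_eq_of_three_le_finrank_range_ad hrank hT hY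
    exact of_lie_eq U f h
  by_cases hZ : 3 ≤ finrank ℝ (LinearMap.range (ad ℝ L Z))
  · obtain ⟨U, f, h⟩ := exists_lie_eq_of_three_le_finrank_range_ad hrank
      (by rwa [← lie_skew, neg_ne_zero]) hZ
    exact of_lie_eq U f h
  have := finrank_derivedSeries_one_le_three hrank hT (by omega) (by omega)
  omega

end LieAlgebra

theorem MD_iff_derived_abelian_general
    (L : Type) [LieRing L] [LieAlgebra ℝ L] [FiniteDimensional ℝ L]
    [LieAlgebra.IsSolvable L]
    (hn : 5 ≤ Module.finrank ℝ L)
    (hcodim : Module.finrank ℝ (LieAlgebra.derivedSeries ℝ L 1)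
      = Module.finrank ℝ L - 1) :
    IsMDAlgebra L ↔ IsLieAbelian (LieAlgebra.derivedSeries ℝ L 1) := by
  have hdim : 4 ≤ finrank ℝ (derivedSeries ℝ L 1) := by omega
  have hp : finrank ℝ L ≤ finrank ℝ (derivedSeries ℝ L 1) + 1 := by omega
  constructor
  · rintro ⟨-, k, -, hk⟩
    have hne : derivedSeries ℝ L 1 ≠ ⊥ :=
      (LieSubmodule.nontrivial_iff_ne_bot ..).mp ((Module.finrank_pos_iff (R := ℝ)).mp (by omega))
    obtain ⟨F₂, hF₂⟩ := exists_rankB_BF_eq_two hp hne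
    have hk2 : k = 2 := by rcases hk F₂ with h | h <;> omega
    refine isLieAbelian_derivedSeries_one_of_rankB_le_two (fun F => ?_) hdim
    rcases hk F with h | h <;> omega
  · intro hab
    rw [LieSubmodule.lie_abelian_iff_lie_self_eq_bot, LieSubmodule.lie_eq_bot_iff] at hab
    refine ⟨inferInstance, 2, even_two, fun F => ?_⟩
    by_cases h0 : BF F = 0
    · left
      rw [rankB, h0, LinearMap.ker_zero, finrank_top, Nat.sub_self]
    · exact Or.inr (rankB_BF_eq_two _ hp (fun z hz w hw => by simp [hab z hz w hw]) h0)

theorem MD_iff_derived_abelian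
    (L : Type) [LieRing L] [LieAlgebra ℝ L] [FiniteDimensional ℝ L]
    [LieAlgebra.IsSolvable L]
    (hn : 5 ≤ Module.finrank ℝ L)
    (hcodim : Module.finrank ℝ (LieAlgebra.derivedSeries ℝ L 1)
      = Module.finrank ℝ L - 1)
    (habelian2 : IsLieAbelian (LieAlgebra.derivedSeries ℝ L 2)) :
    IsMDAlgebra L ↔ IsLieAbelian (LieAlgebra.derivedSeries ℝ L 1) :=
  MD_iff_derived_abelian_general L hn hcodim
end
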